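/- arXiv:1101.0053 — 7 statements merged into one kernel-verified Lean document; each statement's English description precedes it below -/
import Mathlib

section
/- Let k be an algebraically closed field and let G₁ and G₂ be groups. Fix a natural number m. Then the following are equivalent: (i) for every nonzero finite-dimensional representation U of the product group G₁ × G₂ over k, the space of (G₁ × G₂)-invariants in the m-th tensor power U^{⊗m} is nonzero; (ii) for every nonzero finite-dimensional representation V of G₁ over k the space of G₁-invariants in V^{⊗m} is nonzero, and for every nonzero finite-dimensional representation W of G₂ over k the space of G₂-invariants in W^{⊗m} is nonzero. -/
open scoped TensorProduct
open Module PiTensorProduct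

/-- The space of `G`-invariants in the `m`-th tensor power of the representation `ρ`
is nonzero, i.e. there is a nonzero tensor fixed by the `m`-fold tensor product action
of every element of `G`. -/
def TensorPowerInvariantsNonzero (k G V : Type) [Field k] [Group G]
    [AddCommGroup V] [Module k V] (ρ : Representation k G V) (m : ℕ) : Prop :=
  ∃ x : ⨂[k]^m V, x ≠ 0 ∧
    ∀ g : G, PiTensorProduct.map (fun _ : Fin m => ρ g) x = x

namespace TPAux


variable {k : Type} [Field k]

theorem fd_tensorPower (M : Type) [AddCommGroup M] [Module k M]
    [FiniteDimensional k M] (m : ℕ) : FiniteDimensional k (⨂[k]^m M) := by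
  induction m with
  | zero => exact ((PiTensorProduct.isEmptyEquiv (Fin 0) : (⨂[k]^0 M) ≃ₗ[k] k)).symm.finiteDimensional
  | succ n ih =>
    haveI := ih
    exact ((TensorPower.mulEquiv (R := k) (M := M) (n := n) (m := 1)).symm.trans
      (TensorProduct.congr (LinearEquiv.refl k _)
        (PiTensorProduct.subsingletonEquiv (0 : Fin 1)))).symm.finiteDimensional

theorem finrank_tensorPower (M : Type) [AddCommGroup M] [Module k M]
    [FiniteDimensional k M] (m : ℕ) :
    finrank k (⨂[k]^m M) = (finrank k M) ^ m := by
  induction m with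
  | zero => simpa using ((PiTensorProduct.isEmptyEquiv (Fin 0) : (⨂[k]^0 M) ≃ₗ[k] k)).finrank_eq
  | succ n ih =>
    haveI := fd_tensorPower (k := k) M n
    have e := ((TensorPower.mulEquiv (R := k) (M := M) (n := n) (m := 1)).symm.trans
      (TensorProduct.congr (LinearEquiv.refl k _)
        (PiTensorProduct.subsingletonEquiv (0 : Fin 1)))).finrank_eq
    rw [e, finrank_tensorProduct, ih, pow_succ]

theorem map_tpow_injective {M N : Type} [AddCommGroup M] [Module k M] [AddCommGroup N]
    [Module k N] (f : M →ₗ[k] N) (hf : Function.Injective f) (m : ℕ) :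
    Function.Injective (PiTensorProduct.map (fun _ : Fin m => f)) := by
  obtain ⟨g, hg⟩ := f.exists_leftInverse_of_injective (LinearMap.ker_eq_bot.2 hf)
  have hcomp : (PiTensorProduct.map (fun _ : Fin m => g)) ∘ₗ
      (PiTensorProduct.map fun _ : Fin m => f) = LinearMap.id := by
    rw [← PiTensorProduct.map_comp]
    have : (fun _ : Fin m => g ∘ₗ f) = fun _ : Fin m => (LinearMap.id : M →ₗ[k] M) := by
      funext i; rw [hg]
    rw [this, PiTensorProduct.map_id]
  intro a b hab
  have := congrArg (PiTensorProduct.map (fun _ : Fin m => g)) hab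
  simpa [← LinearMap.comp_apply, hcomp] using this



variable {k : Type} [Field k] {m : ℕ}

theorem ext₂ {M N E : Type} [AddCommGroup M] [Module k M] [AddCommGroup N] [Module k N]
    [AddCommGroup E] [Module k E]
    {φ ψ : (⨂[k]^m M) →ₗ[k] (⨂[k]^m N) →ₗ[k] E}
    (H : ∀ v w, φ (tprod k v) (tprod k w) = ψ (tprod k v) (tprod k w)) : φ = ψ := by
  apply PiTensorProduct.ext
  apply MultilinearMap.ext
  intro v
  apply PiTensorProduct.ext
  apply MultilinearMap.ext
  intro w
  exact H v w

variable (m)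

noncomputable def interchange (M N : Type) [AddCommGroup M] [Module k M] [AddCommGroup N]
    [Module k N] :
    ((⨂[k]^m M) ⊗[k] (⨂[k]^m N)) →ₗ[k] ⨂[k]^m (M ⊗[k] N) :=
  TensorProduct.lift (PiTensorProduct.map₂ (fun _ : Fin m => TensorProduct.mk k M N))

variable {m}

@[simp] theorem interchange_tprod {M N : Type} [AddCommGroup M] [Module k M] [AddCommGroup N]
    [Module k N] (v : Fin m → M) (w : Fin m → N) :
    interchange m M N ((tprod k v) ⊗ₜ[k] (tprod k w)) = tprod k (fun i => v i ⊗ₜ[k] w i) := by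
  simp [interchange, PiTensorProduct.map₂_tprod_tprod]

theorem interchange_naturality {M N M' N' : Type} [AddCommGroup M] [Module k M]
    [AddCommGroup N] [Module k N] [AddCommGroup M'] [Module k M'] [AddCommGroup N'] [Module k N']
    (A : M →ₗ[k] M') (B : N →ₗ[k] N') (x : ⨂[k]^m M) (y : ⨂[k]^m N) :
    PiTensorProduct.map (fun _ : Fin m => TensorProduct.map A B)
        (interchange m M N (x ⊗ₜ[k] y))
      = interchange m M' N'
          ((PiTensorProduct.map (fun _ : Fin m => A) x) ⊗ₜ[k]
            (PiTensorProduct.map (fun _ : Fin m => B) y)) := by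
  have hLR : (PiTensorProduct.map₂ (fun _ : Fin m => TensorProduct.mk k M N)).compr₂
        (PiTensorProduct.map (fun _ : Fin m => TensorProduct.map A B))
      = (PiTensorProduct.map₂ (fun _ : Fin m => TensorProduct.mk k M' N')).compl₁₂
          (PiTensorProduct.map (fun _ : Fin m => A))
          (PiTensorProduct.map (fun _ : Fin m => B)) := by
    apply ext₂
    intro v w
    simp [PiTensorProduct.map₂_tprod_tprod, PiTensorProduct.map_tprod]
  have h1 : interchange m M N (x ⊗ₜ[k] y)
      = PiTensorProduct.map₂ (fun _ : Fin m => TensorProduct.mk k M N) x y := rfl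
  have h2 : interchange m M' N'
        ((PiTensorProduct.map (fun _ : Fin m => A) x) ⊗ₜ[k]
          (PiTensorProduct.map (fun _ : Fin m => B) y))
      = PiTensorProduct.map₂ (fun _ : Fin m => TensorProduct.mk k M' N')
          (PiTensorProduct.map (fun _ : Fin m => A) x)
          (PiTensorProduct.map (fun _ : Fin m => B) y) := rfl
  rw [h1, h2]
  exact DFunLike.congr_fun (DFunLike.congr_fun hLR x) y


theorem interchange_surjective (M N : Type) [AddCommGroup M] [Module k M] [AddCommGroup N]
    [Module k N] : Function.Surjective (interchange (k := k) m M N) := by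
  classical
  rw [← LinearMap.range_eq_top, ← top_le_iff, ← PiTensorProduct.span_tprod_eq_top,
    Submodule.span_le]
  rintro _ ⟨t, rfl⟩
  choose S hS using fun i => TensorProduct.exists_finset (t i)
  have ht : t = fun i => ∑ p ∈ S i, p.1 ⊗ₜ[k] p.2 := funext hS
  have hsum : tprod k t
      = ∑ γ ∈ Fintype.piFinset S, tprod k (fun i => (γ i).1 ⊗ₜ[k] (γ i).2) := by
    rw [ht]
    exact (PiTensorProduct.tprod k).map_sum_finset (g := fun _ (p : M × N) => p.1 ⊗ₜ[k] p.2)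
      (A := S)
  rw [SetLike.mem_coe, hsum]
  refine Submodule.sum_mem _ (fun γ _ => ?_)
  exact ⟨(tprod k fun i => (γ i).1) ⊗ₜ[k] (tprod k fun i => (γ i).2), interchange_tprod _ _⟩

theorem interchange_injective (M N : Type) [AddCommGroup M] [Module k M] [AddCommGroup N]
    [Module k N] [FiniteDimensional k M] [FiniteDimensional k N] :
    Function.Injective (interchange (k := k) m M N) := by
  haveI := fd_tensorPower (k := k) M m
  haveI := fd_tensorPower (k := k) N m
  haveI := fd_tensorPower (k := k) (M ⊗[k] N) m
  have hrk : finrank k (⨂[k]^m (M ⊗[k] N)) = finrank k ((⨂[k]^m M) ⊗[k] (⨂[k]^m N)) := by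
    rw [finrank_tensorProduct, finrank_tensorPower, finrank_tensorPower, finrank_tensorPower,
      finrank_tensorProduct, mul_pow]
  let e : (⨂[k]^m (M ⊗[k] N)) ≃ₗ[k] ((⨂[k]^m M) ⊗[k] (⨂[k]^m N)) :=
    LinearEquiv.ofFinrankEq _ _ hrk
  have hinj : Function.Injective (e.toLinearMap ∘ₗ interchange (k := k) m M N) := by
    rw [LinearMap.injective_iff_surjective]
    exact e.surjective.comp (interchange_surjective M N)
  intro a b hab
  exact hinj (by simp [LinearMap.comp_apply, hab])

theorem tmul_ne_zero {A B : Type} [AddCommGroup A] [Module k A] [AddCommGroup B] [Module k B]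
    {x : A} {y : B} (hx : x ≠ 0) (hy : y ≠ 0) : x ⊗ₜ[k] y ≠ (0 : A ⊗[k] B) := by
  have hx' : ¬ ∀ φ : Module.Dual k A, φ x = 0 :=
    fun h => hx ((Module.forall_dual_apply_eq_zero_iff k x).1 h)
  have hy' : ¬ ∀ ψ : Module.Dual k B, ψ y = 0 :=
    fun h => hy ((Module.forall_dual_apply_eq_zero_iff k y).1 h)
  push_neg at hx' hy'
  obtain ⟨φ, hφ⟩ := hx'
  obtain ⟨ψ, hψ⟩ := hy'
  intro h
  have : (TensorProduct.lid k k) (TensorProduct.map φ ψ (x ⊗ₜ[k] y)) = φ x * ψ y := by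
    simp [TensorProduct.map_tmul, TensorProduct.lid_tmul, smul_eq_mul]
  rw [h] at this
  simp only [map_zero] at this
  exact mul_ne_zero hφ hψ this.symm

theorem TPIN_of_injective {G : Type} [Group G] {M N : Type} [AddCommGroup M] [Module k M]
    [AddCommGroup N] [Module k N] (ρM : Representation k G M) (ρN : Representation k G N)
    (f : M →ₗ[k] N) (hinj : Function.Injective f)
    (hequiv : ∀ g, ρN g ∘ₗ f = f ∘ₗ ρM g) {m : ℕ}
    (h : TensorPowerInvariantsNonzero k G M ρM m) :
    TensorPowerInvariantsNonzero k G N ρN m := by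
  obtain ⟨x, hx, hfix⟩ := h
  refine ⟨PiTensorProduct.map (fun _ : Fin m => f) x, ?_, ?_⟩
  · intro h0
    exact hx (map_tpow_injective f hinj m (by simpa using h0))
  · intro g
    have h1 : PiTensorProduct.map (fun _ : Fin m => ρN g) ∘ₗ
        PiTensorProduct.map (fun _ : Fin m => f)
        = PiTensorProduct.map (fun _ : Fin m => f) ∘ₗ
          PiTensorProduct.map (fun _ : Fin m => ρM g) := by
      rw [← PiTensorProduct.map_comp, ← PiTensorProduct.map_comp]
      simp only [hequiv g]
    calc PiTensorProduct.map (fun _ : Fin m => ρN g)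
          (PiTensorProduct.map (fun _ : Fin m => f) x)
        = PiTensorProduct.map (fun _ : Fin m => f)
            (PiTensorProduct.map (fun _ : Fin m => ρM g) x) := by
          rw [← LinearMap.comp_apply, h1, LinearMap.comp_apply]
      _ = PiTensorProduct.map (fun _ : Fin m => f) x := by rw [hfix g]

variable {G : Type} [Group G]

/-- The restriction of a representation to a stable submodule. -/
def resRep {U : Type} [AddCommGroup U] [Module k U] (σ : Representation k G U)
    (p : Submodule k U) (hp : ∀ g, ∀ x ∈ p, σ g x ∈ p) : Representation k G p where
  toFun g := (σ g).restrict (hp g)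
  map_one' := by ext x; simp [LinearMap.restrict_apply]
  map_mul' g h := by ext x; simp [LinearMap.restrict_apply]

@[simp] theorem resRep_coe {U : Type} [AddCommGroup U] [Module k U]
    (σ : Representation k G U) (p : Submodule k U) (hp : ∀ g, ∀ x ∈ p, σ g x ∈ p)
    (g : G) (x : p) : ((resRep σ p hp g x : p) : U) = σ g (x : U) := rfl

theorem exists_minimal_stable {U : Type} [AddCommGroup U] [Module k U]
    [FiniteDimensional k U] [Nontrivial U] (σ : Representation k G U) :
    ∃ p : Submodule k U, (∀ g, ∀ x ∈ p, σ g x ∈ p) ∧ p ≠ ⊥ ∧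
      ∀ q : Submodule k U, (∀ g, ∀ x ∈ q, σ g x ∈ q) → q ≠ ⊥ → q ≤ p → q = p := by
  classical
  set S : Set ℕ :=
    {n | ∃ p : Submodule k U, (∀ g, ∀ x ∈ p, σ g x ∈ p) ∧ p ≠ ⊥ ∧ finrank k p = n} with hSdef
  have hS : S.Nonempty :=
    ⟨finrank k (⊤ : Submodule k U), ⊤, fun _ _ _ => trivial, bot_lt_top.ne', rfl⟩
  obtain ⟨p, hp1, hp2, hp3⟩ := Nat.sInf_mem hS
  refine ⟨p, hp1, hp2, fun q hq1 hq2 hle => ?_⟩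
  have hmem : finrank k q ∈ S := ⟨q, hq1, hq2, rfl⟩
  exact Submodule.eq_of_le_of_finrank_le hle (by rw [hp3]; exact Nat.sInf_le hmem)

theorem scalar_of_equivariant [IsAlgClosed k] {V : Type} [AddCommGroup V] [Module k V]
    [FiniteDimensional k V] [Nontrivial V] (τ : Representation k G V)
    (hsimp : ∀ p : Submodule k V, (∀ g, ∀ x ∈ p, τ g x ∈ p) → p ≠ ⊥ → p = ⊤)
    (φ : V →ₗ[k] V) (hφ : ∀ g, φ ∘ₗ τ g = τ g ∘ₗ φ) : ∃ c : k, φ = c • LinearMap.id := by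
  obtain ⟨c, hc⟩ := Module.End.exists_eigenvalue (φ : Module.End k V)
  refine ⟨c, ?_⟩
  have hφ' : ∀ g x, φ (τ g x) = τ g (φ x) := fun g x => DFunLike.congr_fun (hφ g) x
  set ψ : V →ₗ[k] V := φ - c • (LinearMap.id : V →ₗ[k] V) with hψdef
  have hψ : ∀ x, ψ x = φ x - c • x := fun x => rfl
  have hker : LinearMap.ker ψ = ⊤ := by
    apply hsimp
    · intro g x hx
      rw [LinearMap.mem_ker] at hx ⊢
      have : ψ (τ g x) = τ g (ψ x) := by
        rw [hψ, hψ, hφ' g x, map_sub, map_smul]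
      rw [this, hx, map_zero]
    · have h1 : (Module.End.eigenspace (φ : Module.End k V) c) ≠ ⊥ :=
        Module.End.hasEigenvalue_iff.1 hc
      have h2 : Module.End.eigenspace (φ : Module.End k V) c = LinearMap.ker ψ := by
        rw [Module.End.eigenspace_def]
        rfl
      rwa [h2] at h1
  have h0 : ψ = 0 := LinearMap.ker_eq_top.1 hker
  have := sub_eq_zero.1 h0
  exact this

theorem key_indep [IsAlgClosed k] {V U : Type} [AddCommGroup V] [Module k V]
    [FiniteDimensional k V] [Nontrivial V] [AddCommGroup U] [Module k U]
    (τ : Representation k G V) (σ : Representation k G U)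
    (hsimp : ∀ p : Submodule k V, (∀ g, ∀ x ∈ p, τ g x ∈ p) → p ≠ ⊥ → p = ⊤) :
    ∀ (n : ℕ) (f : Fin n → (V →ₗ[k] U)), LinearIndependent k f →
      (∀ i g, σ g ∘ₗ f i = f i ∘ₗ τ g) →
      ∀ v : Fin n → V, (∑ i, f i (v i)) = 0 → ∀ i, v i = 0 := by
  intro n
  induction n with
  | zero => intro f _ _ v _ i; exact i.elim0
  | succ n ih =>
    intro f hfind hfeq v hv
    classical
    have hfeq' : ∀ i g x, σ g (f i x) = f i (τ g x) := fun i g x =>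
      DFunLike.congr_fun (hfeq i g) x
    -- the diagonal action
    set D : G → (Fin (n + 1) → V) →ₗ[k] (Fin (n + 1) → V) :=
      fun g => LinearMap.pi (fun i => (τ g) ∘ₗ (LinearMap.proj i)) with hDdef
    have hD : ∀ g u i, D g u i = τ g (u i) := fun g u i => rfl
    -- the cyclic submodule generated by v
    set K : Submodule k (Fin (n + 1) → V) :=
      Submodule.span k (Set.range fun g : G => fun i => τ g (v i)) with hKdef
    have hvK : v ∈ K := by
      apply Submodule.subset_span
      exact ⟨1, by funext i; simp⟩
    have hKstab : ∀ g, ∀ u ∈ K, D g u ∈ K := by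
      intro g u hu
      have : Submodule.map (D g) K ≤ K := by
        rw [hKdef, Submodule.map_span, Submodule.span_le]
        rintro _ ⟨_, ⟨g', rfl⟩, rfl⟩
        apply Submodule.subset_span
        refine ⟨g * g', ?_⟩
        funext i
        show τ (g * g') (v i) = τ g (τ g' (v i))
        rw [_root_.map_mul]
        rfl
      exact this ⟨u, hu, rfl⟩
    -- the sum map
    set F : (Fin (n + 1) → V) →ₗ[k] U := ∑ i, (f i) ∘ₗ LinearMap.proj i with hFdef
    have hFapp : ∀ u, F u = ∑ i, f i (u i) := by
      intro u
      rw [hFdef]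
      simp [LinearMap.sum_apply]
    have hKF : K ≤ LinearMap.ker F := by
      rw [hKdef, Submodule.span_le]
      rintro _ ⟨g, rfl⟩
      have hgoal : F (fun i => τ g (v i)) = 0 := by
        rw [hFapp]
        have : ∀ i, f i (τ g (v i)) = σ g (f i (v i)) := fun i => (hfeq' i g (v i)).symm
        simp only [this, ← map_sum]
        rw [hv, map_zero]
      simpa using LinearMap.mem_ker.2 hgoal
    set prl : (Fin (n + 1) → V) →ₗ[k] V := LinearMap.proj (Fin.last n) with hprldef
    -- the kernel of the last projection on K is trivial
    have hK₀ : K ⊓ LinearMap.ker prl = ⊥ := by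
      rw [Submodule.eq_bot_iff]
      rintro u ⟨huK, hul⟩
      have hul'' : prl u = 0 := hul
      have hFu : ∑ i, f i (u i) = 0 := by
        rw [← hFapp]; exact hKF huK
      rw [Fin.sum_univ_castSucc] at hFu
      have hul' : (u (Fin.last n)) = 0 := hul''
      rw [hul', map_zero, add_zero] at hFu
      have := ih (fun j => f (Fin.castSucc j))
        (hfind.comp Fin.castSucc (Fin.castSucc_injective n))
        (fun j g => hfeq (Fin.castSucc j) g) (fun j => u (Fin.castSucc j)) hFu
      funext i
      refine Fin.lastCases ?_ ?_ i
      · exact hul'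
      · exact this
    by_cases hvl : v (Fin.last n) = 0
    · have hv0 : v = 0 := by
        rw [← Submodule.mem_bot (R := k), ← hK₀]
        exact Submodule.mem_inf.2 ⟨hvK, hvl⟩
      intro i; rw [hv0]; rfl
    · exfalso
      have hMstab : ∀ g, ∀ x ∈ Submodule.map prl K, τ g x ∈ Submodule.map prl K := by
        rintro g _ ⟨u, hu, rfl⟩
        exact ⟨D g u, hKstab g u hu, rfl⟩
      have hMne : Submodule.map prl K ≠ ⊥ := by
        rw [Submodule.ne_bot_iff]
        exact ⟨v (Fin.last n), ⟨v, hvK, rfl⟩, hvl⟩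
      have hM : Submodule.map prl K = ⊤ := hsimp _ hMstab hMne
      have hinj : Function.Injective (prl ∘ₗ K.subtype) := by
        rw [← LinearMap.ker_eq_bot]
        rw [Submodule.eq_bot_iff]
        rintro ⟨u, huK⟩ hu
        rw [LinearMap.mem_ker, LinearMap.comp_apply] at hu
        have : u ∈ K ⊓ LinearMap.ker prl := ⟨huK, hu⟩
        rw [hK₀, Submodule.mem_bot] at this
        exact Subtype.ext this
      have hsurj : Function.Surjective (prl ∘ₗ K.subtype) := by
        intro w
        have : w ∈ Submodule.map prl K := hM ▸ Submodule.mem_top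
        obtain ⟨u, huK, hu⟩ := this
        exact ⟨⟨u, huK⟩, hu⟩
      set e : K ≃ₗ[k] V := LinearEquiv.ofBijective (prl ∘ₗ K.subtype) ⟨hinj, hsurj⟩ with hedef
      have heapp : ∀ u : K, e u = (u : Fin (n + 1) → V) (Fin.last n) := fun u => rfl
      have hesymm : ∀ (g : G) (w : V),
          ((e.symm (τ g w) : K) : Fin (n + 1) → V) = D g (e.symm w) := by
        intro g w
        have h1 : D g ((e.symm w : K) : Fin (n + 1) → V) ∈ K := hKstab g _ (e.symm w).2
        have hxl : ((e.symm w : K) : Fin (n + 1) → V) (Fin.last n) = w := by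
          rw [← heapp]
          exact e.apply_symm_apply w
        have h2 : e ⟨D g ((e.symm w : K) : Fin (n + 1) → V), h1⟩ = τ g w := by
          show (D g ((e.symm w : K) : Fin (n + 1) → V)) (Fin.last n) = τ g w
          rw [hD, hxl]
        have := congrArg (fun z => ((e.symm z : K) : Fin (n + 1) → V)) h2
        simpa [LinearEquiv.symm_apply_apply] using this.symm
      have hcoef : ∀ j : Fin n, ∃ c : k, ∀ w : V,
          ((e.symm w : K) : Fin (n + 1) → V) (Fin.castSucc j) = c • w := by
        intro j
        set φ : V →ₗ[k] V :=
          ((LinearMap.proj (Fin.castSucc j)) ∘ₗ K.subtype) ∘ₗ (e.symm : V →ₗ[k] K) with hφdef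
        have hφapp : ∀ w, φ w = ((e.symm w : K) : Fin (n + 1) → V) (Fin.castSucc j) :=
          fun w => rfl
        have hφeq : ∀ g, φ ∘ₗ τ g = τ g ∘ₗ φ := by
          intro g
          apply LinearMap.ext
          intro w
          show φ (τ g w) = τ g (φ w)
          rw [hφapp, hφapp, hesymm g w, hD]
        obtain ⟨c, hc⟩ := scalar_of_equivariant τ hsimp φ hφeq
        refine ⟨c, fun w => ?_⟩
        rw [← hφapp, hc]
        simp
      choose c hc using hcoef
      have hv' : ((e.symm (v (Fin.last n)) : K) : Fin (n + 1) → V) = v := by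
        have h1 : e ⟨v, hvK⟩ = v (Fin.last n) := rfl
        rw [← h1, LinearEquiv.symm_apply_apply]
      have hvj : ∀ j : Fin n, v (Fin.castSucc j) = c j • v (Fin.last n) := by
        intro j
        conv_lhs => rw [← hv']
        exact hc j _
      set F0 : V →ₗ[k] U := f (Fin.last n) + ∑ j : Fin n, c j • f (Fin.castSucc j) with hF0def
      have hF0app : ∀ x, F0 x = f (Fin.last n) x + ∑ j : Fin n, c j • f (Fin.castSucc j) x := by
        intro x
        rw [hF0def]
        simp [LinearMap.sum_apply]
      have hF0v : F0 (v (Fin.last n)) = 0 := by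
        rw [hF0app]
        have h2 : ∑ i, f i (v i) = 0 := hv
        rw [Fin.sum_univ_castSucc] at h2
        have h3 : ∀ j : Fin n, f (Fin.castSucc j) (v (Fin.castSucc j))
            = c j • f (Fin.castSucc j) (v (Fin.last n)) := by
          intro j
          rw [hvj j, map_smul]
        rw [Finset.sum_congr rfl (fun j _ => h3 j)] at h2
        rw [add_comm]
        exact h2
      have hF0stab : ∀ g, ∀ x ∈ LinearMap.ker F0, τ g x ∈ LinearMap.ker F0 := by
        intro g x hx
        rw [LinearMap.mem_ker] at hx ⊢
        have hF0eq : ∀ x, F0 (τ g x) = σ g (F0 x) := by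
          intro x
          rw [hF0app, hF0app, map_add, map_sum]
          congr 1
          · exact (hfeq' _ g x).symm
          · refine Finset.sum_congr rfl (fun j _ => ?_)
            rw [map_smul, hfeq' _ g x]
        rw [hF0eq, hx, map_zero]
      have hF0ker : LinearMap.ker F0 = ⊤ :=
        hsimp _ hF0stab ((Submodule.ne_bot_iff _).2
          ⟨v (Fin.last n), LinearMap.mem_ker.2 hF0v, hvl⟩)
      have hF0zero : F0 = 0 := LinearMap.ker_eq_top.1 hF0ker
      -- contradict linear independence
      set l : Fin (n + 1) → k := fun i => Fin.lastCases 1 c i with hldef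
      have hsum : ∑ i, l i • f i = 0 := by
        rw [Fin.sum_univ_castSucc]
        have h1 : ∀ j : Fin n, l (Fin.castSucc j) = c j := fun j => by
          rw [hldef]; simp
        have h2 : l (Fin.last n) = 1 := by rw [hldef]; simp
        rw [h2, one_smul, Finset.sum_congr rfl (fun j _ => by rw [h1 j])]
        rw [add_comm]
        exact hF0zero
      have := Fintype.linearIndependent_iff.1 hfind l hsum (Fin.last n)
      rw [hldef] at this
      simp at this

theorem eval_injective [IsAlgClosed k] {V U : Type} [AddCommGroup V] [Module k V]
    [FiniteDimensional k V] [Nontrivial V] [AddCommGroup U] [Module k U]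
    [FiniteDimensional k U]
    (τ : Representation k G V) (σ : Representation k G U)
    (hsimp : ∀ p : Submodule k V, (∀ g, ∀ x ∈ p, τ g x ∈ p) → p ≠ ⊥ → p = ⊤)
    (W : Submodule k (V →ₗ[k] U)) (hW : ∀ f ∈ W, ∀ g, σ g ∘ₗ f = f ∘ₗ τ g) :
    Function.Injective (TensorProduct.lift (W.subtype.flip)) := by
  classical
  set d := finrank k W with hd
  set β : Basis (Fin d) k W := Module.finBasis k W with hβ
  set E : (V ⊗[k] ↥W) ≃ₗ[k] (Fin d →₀ V) :=
    (TensorProduct.congr (LinearEquiv.refl k V) β.repr).trans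
      (TensorProduct.finsuppScalarRight k k V (Fin d)) with hE
  set L : (Fin d →₀ V) →ₗ[k] U := ∑ i : Fin d, (β i : V →ₗ[k] U) ∘ₗ Finsupp.lapply i with hL
  have hLapp : ∀ c : Fin d →₀ V, L c = ∑ i, (β i : V →ₗ[k] U) (c i) := by
    intro c
    rw [hL]
    simp [LinearMap.sum_apply, Finsupp.lapply]
  have hmaps : TensorProduct.lift (W.subtype.flip)
      = L ∘ₗ (E : V ⊗[k] ↥W →ₗ[k] (Fin d →₀ V)) := by
    apply TensorProduct.ext'
    intro v f
    have hEvf : (E (v ⊗ₜ[k] f)) = TensorProduct.finsuppScalarRight k k V (Fin d)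
        (v ⊗ₜ[k] (β.repr f)) := by
      rw [hE]
      simp [TensorProduct.congr_tmul]
    show TensorProduct.lift (W.subtype.flip) (v ⊗ₜ[k] f) = L (E (v ⊗ₜ[k] f))
    rw [hEvf, hLapp]
    have hterm : ∀ i, (TensorProduct.finsuppScalarRight k k V (Fin d) (v ⊗ₜ[k] β.repr f)) i
        = β.repr f i • v := fun i => TensorProduct.finsuppScalarRight_apply_tmul_apply _ _ _
    simp only [hterm, map_smul]
    have hlhs : TensorProduct.lift (W.subtype.flip) (v ⊗ₜ[k] f) = (f : V →ₗ[k] U) v := rfl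
    rw [hlhs]
    conv_lhs => rw [← β.sum_repr f]
    simp only [AddSubmonoidClass.coe_finset_sum, LinearMap.sum_apply, SetLike.val_smul,
      LinearMap.smul_apply]
  have hind : LinearIndependent k (fun i : Fin d => (β i : V →ₗ[k] U)) :=
    β.linearIndependent.map' W.subtype W.ker_subtype
  have hker : LinearMap.ker (TensorProduct.lift (W.subtype.flip) : V ⊗[k] ↥W →ₗ[k] U) = ⊥ := by
    rw [Submodule.eq_bot_iff]
    intro t ht
    rw [LinearMap.mem_ker, hmaps, LinearMap.comp_apply, hLapp] at ht
    have hzero : ∀ i, (E t) i = 0 :=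
      key_indep τ σ hsimp d (fun i => (β i : V →ₗ[k] U)) hind
        (fun i g => hW _ (β i).2 g) (fun i => (E t) i) ht
    have hE0 : E t = 0 := Finsupp.ext hzero
    have := congrArg E.symm hE0
    simpa using this
  intro a b hab
  have hab' : (TensorProduct.lift (W.subtype.flip)) (a - b) = 0 := by
    rw [map_sub, hab, sub_self]
  have h2 : a - b ∈ LinearMap.ker
      (TensorProduct.lift (W.subtype.flip) : V ⊗[k] ↥W →ₗ[k] U) := hab'
  rw [hker, Submodule.mem_bot] at h2
  exact sub_eq_zero.1 h2

end TPAux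

set_option maxHeartbeats 1000000 in
set_option synthInstance.maxHeartbeats 200000 in
open TPAux in
theorem stmt_0 (k : Type) [Field k] [IsAlgClosed k]
    (G₁ G₂ : Type) [Group G₁] [Group G₂] (m : ℕ) :
    (∀ (U : Type) [AddCommGroup U] [Module k U] [FiniteDimensional k U] [Nontrivial U],
      ∀ ρ : Representation k (G₁ × G₂) U,
        TensorPowerInvariantsNonzero k (G₁ × G₂) U ρ m) ↔
    ((∀ (V : Type) [AddCommGroup V] [Module k V] [FiniteDimensional k V] [Nontrivial V],
      ∀ ρ : Representation k G₁ V, TensorPowerInvariantsNonzero k G₁ V ρ m) ∧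
     (∀ (W : Type) [AddCommGroup W] [Module k W] [FiniteDimensional k W] [Nontrivial W],
      ∀ ρ : Representation k G₂ W, TensorPowerInvariantsNonzero k G₂ W ρ m)) := by
  constructor
  · intro h
    refine ⟨?_, ?_⟩
    · intro V _ _ _ _ ρV
      obtain ⟨x, hx, hinv⟩ := h V (ρV.comp (MonoidHom.fst G₁ G₂))
      exact ⟨x, hx, fun g => hinv (g, 1)⟩
    · intro W _ _ _ _ ρW
      obtain ⟨x, hx, hinv⟩ := h W (ρW.comp (MonoidHom.snd G₁ G₂))
      exact ⟨x, hx, fun g => hinv (1, g)⟩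
  · rintro ⟨h₁, h₂⟩ U _ _ _ _ ρ
    classical
    set ρ₁ : Representation k G₁ U := ρ.comp (MonoidHom.inl G₁ G₂) with hρ₁
    set ρ₂ : Representation k G₂ U := ρ.comp (MonoidHom.inr G₁ G₂) with hρ₂
    have hsplit : ∀ (a : G₁) (b : G₂), ρ₂ b * ρ₁ a = ρ (a, b) := by
      intro a b
      show ρ (1, b) * ρ (a, 1) = ρ (a, b)
      rw [← _root_.map_mul]
      congr 1
      rw [Prod.mk_mul_mk, one_mul, mul_one]
    have hsplit' : ∀ (a : G₁) (b : G₂), ρ₁ a * ρ₂ b = ρ (a, b) := by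
      intro a b
      show ρ (a, 1) * ρ (1, b) = ρ (a, b)
      rw [← _root_.map_mul]
      congr 1
      rw [Prod.mk_mul_mk, one_mul, mul_one]
    have hcomm : ∀ (a : G₁) (b : G₂) (x : U), ρ₁ a (ρ₂ b x) = ρ₂ b (ρ₁ a x) := by
      intro a b x
      have h1 := DFunLike.congr_fun (hsplit a b) x
      have h2 := DFunLike.congr_fun (hsplit' a b) x
      rw [Module.End.mul_apply] at h1
      rw [Module.End.mul_apply] at h2
      rw [h2, ← h1]
    obtain ⟨p, hpstab, hpbot, hpmin⟩ := exists_minimal_stable ρ₁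
    haveI : Nontrivial p := Submodule.nontrivial_iff_ne_bot.2 hpbot
    set τ : Representation k G₁ p := resRep ρ₁ p hpstab with hτ
    have hτcoe : ∀ (g : G₁) (x : p), ((τ g x : p) : U) = ρ₁ g (x : U) := fun g x => rfl
    have hsimp : ∀ q : Submodule k ↥p, (∀ g, ∀ x ∈ q, τ g x ∈ q) → q ≠ ⊥ → q = ⊤ := by
      intro q hq hqne
      have hle : Submodule.map p.subtype q ≤ p := by
        rintro _ ⟨x, _, rfl⟩
        exact x.2
      have hstab : ∀ g, ∀ x ∈ Submodule.map p.subtype q, ρ₁ g x ∈ Submodule.map p.subtype q := by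
        rintro g _ ⟨x, hx, rfl⟩
        exact ⟨τ g x, hq g x hx, (hτcoe g x)⟩
      have hne : Submodule.map p.subtype q ≠ ⊥ := by
        obtain ⟨x, hx, hxne⟩ := (Submodule.ne_bot_iff q).1 hqne
        refine (Submodule.ne_bot_iff _).2 ⟨(x : U), ⟨x, hx, rfl⟩, ?_⟩
        simpa [Submodule.coe_eq_zero] using hxne
      have hmap : Submodule.map p.subtype q = p := hpmin _ hstab hne hle
      have htop : Submodule.map p.subtype (⊤ : Submodule k ↥p) = p := by
        rw [Submodule.map_top, Submodule.range_subtype]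
      exact Submodule.map_injective_of_injective p.injective_subtype (by rw [hmap, htop])
    set Wsub : Submodule k (↥p →ₗ[k] U) :=
      { carrier := {f | ∀ (g : G₁) (x : ↥p), ρ₁ g (f x) = f (τ g x)}
        add_mem' := by
          intro f₁ f₂ hf₁ hf₂ g x
          simp only [LinearMap.add_apply, map_add]
          rw [hf₁ g x, hf₂ g x]
        zero_mem' := by
          intro g x
          simp
        smul_mem' := by
          intro c f hf g x
          simp only [LinearMap.smul_apply, map_smul]
          rw [hf g x] } with hWsubdef
    have hWmem : ∀ f : ↥p →ₗ[k] U,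
        f ∈ Wsub ↔ ∀ (g : G₁) (x : ↥p), ρ₁ g (f x) = f (τ g x) := fun f => Iff.rfl
    have hWequiv : ∀ f ∈ Wsub, ∀ g, ρ₁ g ∘ₗ f = f ∘ₗ τ g := by
      intro f hf g
      apply LinearMap.ext
      intro x
      exact hf g x
    have hπstab : ∀ g : G₂, ∀ f ∈ Wsub, (LinearMap.llcomp k ↥p U U (ρ₂ g)) f ∈ Wsub := by
      intro g f hf g₁ x
      show ρ₁ g₁ (ρ₂ g (f x)) = ρ₂ g (f (τ g₁ x))
      rw [hcomm g₁ g, hf g₁ x]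
    set π : Representation k G₂ ↥Wsub :=
      { toFun := fun g => (LinearMap.llcomp k ↥p U U (ρ₂ g)).restrict (hπstab g)
        map_one' := by
          apply LinearMap.ext
          intro f
          apply Subtype.ext
          apply LinearMap.ext
          intro x
          show ρ₂ 1 ((f : ↥p →ₗ[k] U) x) = (f : ↥p →ₗ[k] U) x
          rw [_root_.map_one]
          rfl
        map_mul' := by
          intro a b
          apply LinearMap.ext
          intro f
          apply Subtype.ext
          apply LinearMap.ext
          intro x
          show ρ₂ (a * b) ((f : ↥p →ₗ[k] U) x)
            = ρ₂ a (ρ₂ b ((f : ↥p →ₗ[k] U) x))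
          rw [_root_.map_mul]
          rfl } with hπ
    have hπcoe : ∀ (g : G₂) (f : ↥Wsub) (x : ↥p),
        ((π g f : ↥Wsub) : ↥p →ₗ[k] U) x = ρ₂ g (((f : ↥p →ₗ[k] U)) x) := fun g f x => rfl
    have hsubmem : p.subtype ∈ Wsub := by
      intro g x
      exact (hτcoe g x).symm
    haveI : Nontrivial ↥Wsub := by
      obtain ⟨x0, hx0⟩ := exists_ne (0 : ↥p)
      refine ⟨⟨p.subtype, hsubmem⟩, 0, ?_⟩
      intro hcontra
      apply hx0
      have : p.subtype = 0 := congrArg Subtype.val hcontra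
      have h0 : (x0 : U) = 0 := by rw [← Submodule.subtype_apply, this]; rfl
      exact Submodule.coe_eq_zero.1 h0
    obtain ⟨x, hxne, hxfix⟩ := h₁ ↥p τ
    obtain ⟨y, hyne, hyfix⟩ := h₂ ↥Wsub π
    set Φ : (↥p ⊗[k] ↥Wsub) →ₗ[k] U := TensorProduct.lift (Wsub.subtype.flip) with hΦ
    have hΦinj : Function.Injective Φ := eval_injective τ ρ₁ hsimp Wsub hWequiv
    have hΦapp : ∀ (v : ↥p) (f : ↥Wsub), Φ (v ⊗ₜ[k] f) = ((f : ↥p →ₗ[k] U)) v :=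
      fun v f => rfl
    set z₀ : ⨂[k]^m (↥p ⊗[k] ↥Wsub) := interchange m ↥p ↥Wsub (x ⊗ₜ[k] y) with hz₀
    refine ⟨PiTensorProduct.map (fun _ : Fin m => Φ) z₀, ?_, ?_⟩
    · intro hzero
      have hz₀ne : z₀ ≠ 0 := by
        intro h0
        exact tmul_ne_zero hxne hyne (interchange_injective ↥p ↥Wsub (by simpa using h0))
      exact hz₀ne (map_tpow_injective Φ hΦinj m (by simpa using hzero))
    · intro g
      have hkey : ρ g ∘ₗ Φ = Φ ∘ₗ (TensorProduct.map (τ g.1) (π g.2)) := by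
        apply TensorProduct.ext'
        intro v f
        show ρ g (Φ (v ⊗ₜ[k] f)) = Φ (TensorProduct.map (τ g.1) (π g.2) (v ⊗ₜ[k] f))
        rw [hΦapp]
        have e1 : (f : ↥p →ₗ[k] U) (τ g.1 v) = ρ₁ g.1 ((f : ↥p →ₗ[k] U) v) :=
          (((hWmem _).1 f.2) g.1 v).symm
        calc ρ g ((f : ↥p →ₗ[k] U) v)
            = ρ (g.1, g.2) ((f : ↥p →ₗ[k] U) v) := by rw [Prod.mk.eta]
          _ = ρ₂ g.2 (ρ₁ g.1 ((f : ↥p →ₗ[k] U) v)) := by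
              rw [← hsplit g.1 g.2]
              rfl
          _ = ρ₂ g.2 ((f : ↥p →ₗ[k] U) (τ g.1 v)) := by rw [e1]
          _ = Φ (TensorProduct.map (τ g.1) (π g.2) (v ⊗ₜ[k] f)) := by
              rw [TensorProduct.map_tmul, hΦapp, hπcoe]
      have hnat : PiTensorProduct.map (fun _ : Fin m => TensorProduct.map (τ g.1) (π g.2)) z₀
          = z₀ := by
        rw [hz₀, interchange_naturality, hxfix g.1, hyfix g.2]
      calc PiTensorProduct.map (fun _ : Fin m => ρ g)
            (PiTensorProduct.map (fun _ : Fin m => Φ) z₀)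
          = PiTensorProduct.map (fun _ : Fin m => ρ g ∘ₗ Φ) z₀ := by
            rw [PiTensorProduct.map_comp]; rfl
        _ = PiTensorProduct.map (fun _ : Fin m => Φ ∘ₗ (TensorProduct.map (τ g.1) (π g.2))) z₀ := by
            simp only [hkey]
        _ = PiTensorProduct.map (fun _ : Fin m => Φ)
              (PiTensorProduct.map (fun _ : Fin m => TensorProduct.map (τ g.1) (π g.2)) z₀) := by
            rw [PiTensorProduct.map_comp]; rfl
        _ = PiTensorProduct.map (fun _ : Fin m => Φ) z₀ := by rw [hnat]
end

section
/- Let K be a field, V a nonzero K-vector space, and W a subgroup of the group of invertible K-linear endomorphisms of V. Suppose that W contains the endomorphism −id and an element w satisfying w³ = id whose only fixed vector is zero (w(v) = v implies v = 0). Then for every natural number k ≥ 2 there exist elements w₁, …, w_k of W with w₁ + w₂ + … + w_k = 0 as endomorphisms of V. -/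
theorem stmt_6 (K : Type) [Field K] (V : Type) [AddCommGroup V] [Module K V]
    [Nontrivial V]
    (W : Subgroup (Module.End K V)ˣ)
    (hneg : (-1 : (Module.End K V)ˣ) ∈ W)
    (w : (Module.End K V)ˣ) (hwW : w ∈ W) (hw3 : w ^ 3 = 1)
    (hfix : ∀ v : V, (w : Module.End K V) v = v → v = 0)
    (n : ℕ) (hn : 2 ≤ n) :
    ∃ u : Fin n → (Module.End K V)ˣ, (∀ i, u i ∈ W) ∧
      ∑ i, (u i : Module.End K V) = 0 := by
  -- key identity: 1 + w + w² = 0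
  have h3 : ((w : Module.End K V)) ^ 3 = 1 := by
    have := congrArg (Units.val) hw3
    simpa [Units.val_pow_eq_pow_val] using this
  have hkey : (1 : Module.End K V) + w + (w : Module.End K V) ^ 2 = 0 := by
    have hprod : ((w : Module.End K V) - 1) *
        (1 + (w : Module.End K V) + (w : Module.End K V) ^ 2) = 0 := by
      have h : ((w : Module.End K V) - 1) *
          (1 + (w : Module.End K V) + (w : Module.End K V) ^ 2)
          = (w : Module.End K V) ^ 3 - 1 := by noncomm_ring
      rw [h, h3, sub_self]
    ext v
    simp only [LinearMap.zero_apply]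
    apply hfix
    have h0 : ((w : Module.End K V) - 1)
        ((((1 : Module.End K V) + w + (w : Module.End K V) ^ 2)) v) = 0 := by
      have := congrArg (fun f : Module.End K V => f v) hprod
      simpa [Module.End.mul_apply] using this
    simpa [LinearMap.sub_apply, Module.End.one_apply, sub_eq_zero] using h0
  clear hfix hw3
  induction n using Nat.strong_induction_on with
  | _ n ih =>
    match n, hn with
    | 2, _ =>
      refine ⟨![1, -1], ?_, ?_⟩
      · intro i
        fin_cases i <;> simp [hneg, W.one_mem]
      · simp [Fin.sum_univ_two]
    | 3, _ =>
      refine ⟨![w, w ^ 2, 1], ?_, ?_⟩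
      · intro i
        fin_cases i <;> simp [hwW, W.one_mem, W.pow_mem hwW]
      · have : (w : Module.End K V) + ((w : Module.End K V)) ^ 2 + 1 = 0 := by
          rw [← hkey]; abel
        simpa [Fin.sum_univ_three, Units.val_pow_eq_pow_val] using this
    | (m + 4), _ =>
      obtain ⟨u, hu1, hu2⟩ := ih (m + 2) (by omega) (by omega)
      refine ⟨Fin.cons 1 (Fin.cons (-1) u), ?_, ?_⟩
      · intro i
        refine Fin.cases ?_ (fun j => ?_) i
        · simpa using W.one_mem
        · refine Fin.cases ?_ (fun j' => ?_) j <;> simp [hneg, hu1]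
      · simp [Fin.sum_univ_succ, hu2]
end

section
/- Let n ≥ 2 and k ≥ 1 be natural numbers. There exist permutations w₁, …, w_k of Fin n such that for every x : Fin n → ℚ with ∑_i x(i) = 0 and every index i one has ∑_{j=1}^{k} x(w_j(i)) = 0, if and only if n divides k. -/
theorem stmt_9 (n k : ℕ) (hn : 2 ≤ n) (hk : 1 ≤ k) :
    (∃ w : Fin k → Equiv.Perm (Fin n),
      ∀ x : Fin n → ℚ, ∑ i, x i = 0 → ∀ i : Fin n, ∑ j, x ((w j) i) = 0) ↔
    n ∣ k := by
  have hn0 : 0 < n := by omega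
  haveI : NeZero n := ⟨by omega⟩
  constructor
  · rintro ⟨w, hw⟩
    set i0 : Fin n := ⟨0, hn0⟩ with hi0
    set f : Fin k → Fin n := fun j => w j i0 with hf
    set c : Fin n → ℕ := fun v => (Finset.univ.filter fun j => f j = v).card with hc
    have hcount : ∀ a b : Fin n, c a = c b := by
      intro a b
      have hx : ∑ v, ((if v = a then (1 : ℚ) else 0) - (if v = b then 1 else 0)) = 0 := by
        simp [Finset.sum_sub_distrib]
      have h := hw _ hx i0
      simp only [Finset.sum_sub_distrib, sub_eq_zero] at h
      have h1 : ∑ j, (if f j = a then (1 : ℚ) else 0) = (c a : ℚ) := by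
        simp [hc, Finset.sum_boole]
      have h2 : ∑ j, (if f j = b then (1 : ℚ) else 0) = (c b : ℚ) := by
        simp [hc, Finset.sum_boole]
      have : (c a : ℚ) = (c b : ℚ) := by rw [← h1, ← h2]; exact h
      exact_mod_cast this
    have hsum : k = ∑ v : Fin n, c v := by
      have := Finset.card_eq_sum_card_fiberwise
        (s := (Finset.univ : Finset (Fin k))) (t := Finset.univ) (f := f)
        (fun x _ => Finset.mem_univ (f x))
      simpa [hc] using this
    have : k = n * c i0 := by
      rw [hsum]
      rw [Finset.sum_congr rfl (fun v _ => hcount v i0)]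
      simp [Finset.sum_const, mul_comm]
    exact ⟨c i0, this⟩
  · rintro ⟨m, rfl⟩
    set e : Fin m × Fin n ≃ Fin (n * m) := finProdFinEquiv.trans (finCongr (Nat.mul_comm m n))
      with he
    refine ⟨fun j => Equiv.addLeft (e.symm j).2, ?_⟩
    intro x hx i
    have h1 : ∑ j : Fin (n * m), x ((e.symm j).2 + i)
        = ∑ p : Fin m × Fin n, x (p.2 + i) :=
      Equiv.sum_comp e.symm (fun p => x (p.2 + i))
    have h2 : ∑ b : Fin n, x (b + i) = 0 := by
      have := Equiv.sum_comp (Equiv.addRight i) x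
      simpa [hx] using this
    calc ∑ j : Fin (n * m), x ((Equiv.addLeft (e.symm j).2) i)
        = ∑ p : Fin m × Fin n, x (p.2 + i) := h1
      _ = ∑ _a : Fin m, ∑ b : Fin n, x (b + i) := by rw [Fintype.sum_prod_type]
      _ = 0 := by simp [h2]
end

section
/- Let n ≥ 2 be an even natural number and k ≥ 1. Call an n × n matrix over ℚ an even signed permutation matrix if there exist a permutation σ of Fin n and signs ε : Fin n → {1, −1} with ∏_i ε(i) = 1 (equivalently, an even number of indices i with ε(i) = −1) such that its (i, j) entry equals ε(j) if σ(j) = i and 0 otherwise. Then there exist even signed permutation matrices A₁, …, A_k with A₁ + … + A_k = 0 if and only if k is even. -/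
/-- An `n × n` matrix over `ℚ` is an even signed permutation matrix if there are a
permutation `σ` and signs `ε i ∈ {1, -1}` with `∏ i, ε i = 1` such that the `(i, j)`
entry equals `ε j` if `σ j = i` and `0` otherwise. -/
def IsEvenSignedPermMatrix {n : ℕ} (A : Matrix (Fin n) (Fin n) ℚ) : Prop :=
  ∃ (σ : Equiv.Perm (Fin n)) (ε : Fin n → ℚ),
    (∀ i, ε i = 1 ∨ ε i = -1) ∧ (∏ i, ε i = 1) ∧
    ∀ i j, A i j = if σ j = i then ε j else 0

theorem stmt_11 (n k : ℕ) (hn : 2 ≤ n) (hneven : Even n) (hk : 1 ≤ k) :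
    (∃ A : Fin k → Matrix (Fin n) (Fin n) ℚ,
      (∀ i, IsEvenSignedPermMatrix (A i)) ∧ ∑ i, A i = 0) ↔ Even k := by
  constructor
  · rintro ⟨A, hA, hsum⟩
    set i0 : Fin n := ⟨0, by omega⟩ with hi0
    set v : Fin k → ℚ := fun m => ∑ j, A m i0 j with hv
    have hv1 : ∀ m, v m = 1 ∨ v m = -1 := by
      intro m
      obtain ⟨σ, ε, hε, -, hAe⟩ := hA m
      have : v m = ε (σ⁻¹ i0) := by
        simp only [hv]
        rw [Finset.sum_congr rfl fun j _ => hAe i0 j]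
        have : ∀ j, (σ j = i0) = (j = σ⁻¹ i0) := by
          intro j
          simp [Equiv.apply_eq_iff_eq_symm_apply, Equiv.Perm.inv_def]
        simp only [this]
        simp [Finset.sum_ite_eq']
      rw [this]; exact hε _
    have hv0 : ∑ m, v m = 0 := by
      calc ∑ m, v m = ∑ m, ∑ j, A m i0 j := rfl
        _ = ∑ j, ∑ m, A m i0 j := Finset.sum_comm
        _ = ∑ j, (∑ m, A m) i0 j := by simp [Matrix.sum_apply]
        _ = 0 := by rw [hsum]; simp
    set S := Finset.univ.filter (fun m => v m = 1) with hS
    have key : (k : ℚ) = 2 * S.card := by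
      have h1 : ∑ m, (v m + 1) = (k : ℚ) := by
        rw [Finset.sum_add_distrib, hv0]; simp
      have h2 : ∑ m, (v m + 1) = 2 * S.card := by
        rw [← Finset.sum_filter_add_sum_filter_not Finset.univ (fun m => v m = 1)]
        have hl : ∑ m ∈ Finset.univ.filter (fun m => v m = 1), (v m + 1) = 2 * S.card := by
          have hterm : ∀ m ∈ S, v m + 1 = 2 := fun m hm => by
            rw [(Finset.mem_filter.mp hm).2]; norm_num
          rw [← hS, Finset.sum_congr rfl hterm, Finset.sum_const]
          push_cast
          ring
        have hr : ∑ m ∈ Finset.univ.filter (fun m => ¬ v m = 1), (v m + 1) = 0 := by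
          apply Finset.sum_eq_zero
          intro m hm
          have := Finset.mem_filter.mp hm
          rcases hv1 m with h | h
          · exact absurd h this.2
          · rw [h]; ring
        rw [hl, hr, add_zero]
      rw [← h1, h2]
    have : k = 2 * S.card := by exact_mod_cast key
    exact ⟨S.card, by omega⟩
  · intro hke
    refine ⟨fun m => ((-1 : ℚ) ^ (m : ℕ)) • (1 : Matrix (Fin n) (Fin n) ℚ), ?_, ?_⟩
    · intro m
      refine ⟨1, fun _ => (-1 : ℚ) ^ (m : ℕ), fun i => ?_, ?_, ?_⟩
      · rcases Nat.even_or_odd (m : ℕ) with h | h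
        · left; exact h.neg_one_pow
        · right; exact h.neg_one_pow
      · rw [Finset.prod_const, Finset.card_univ, Fintype.card_fin, ← pow_mul,
          mul_comm, pow_mul, hneven.neg_one_pow, one_pow]
      · intro i j
        simp [Matrix.smul_apply, Matrix.one_apply, eq_comm]
    · rw [← Finset.sum_smul, Fin.sum_univ_eq_sum_range, neg_one_geom_sum,
        if_pos hke, zero_smul]
end

section
/- Let n ≥ 3 be an odd natural number and k ≥ 1. Call an n × n matrix over ℚ an even signed permutation matrix if there exist a permutation σ of Fin n and signs ε : Fin n → {1, −1} with ∏_i ε(i) = 1 (equivalently, an even number of indices i with ε(i) = −1) such that its (i, j) entry equals ε(j) if σ(j) = i and 0 otherwise. Then there exist even signed permutation matrices A₁, …, A_k with A₁ + … + A_k = 0 if and only if 4 divides k. -/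
/-- Key lemma for the forward direction: the sum of all entries of an even signed
permutation matrix is `n - 4c` for some natural number `c`. -/
lemma entries_sum_aux {n : ℕ} {A : Matrix (Fin n) (Fin n) ℚ}
    (h : IsEvenSignedPermMatrix A) :
    ∃ c : ℕ, ∑ i, ∑ j, A i j = (n : ℚ) - 4 * c := by
  obtain ⟨σ, ε, hε, hprod, hA⟩ := h
  have h1 : ∑ i, ∑ j, A i j = ∑ j, ε j := by
    refine Finset.sum_comm.trans ?_
    refine Finset.sum_congr rfl fun j _ => ?_
    simp [hA]
  set S := Finset.univ.filter (fun j => ε j = -1) with hS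
  have hone : ∀ j ∈ Finset.univ.filter (fun j => ¬ ε j = -1), ε j = 1 := by
    intro j hj
    rcases hε j with h' | h'
    · exact h'
    · exact absurd h' (Finset.mem_filter.mp hj).2
  have hcard : S.card + (Finset.univ.filter (fun j => ¬ ε j = -1)).card = n := by
    rw [Finset.card_filter_add_card_filter_not]
    simp
  have hm : ∏ j, ε j = (-1 : ℚ) ^ S.card := by
    rw [← Finset.prod_filter_mul_prod_filter_not Finset.univ (fun j => ε j = -1)]
    rw [Finset.prod_congr rfl (fun j hj => (Finset.mem_filter.mp hj).2)]
    rw [Finset.prod_const]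
    rw [Finset.prod_congr rfl hone, Finset.prod_const_one, mul_one]
  have heven : Even S.card := by
    rw [hm] at hprod
    exact (neg_one_pow_eq_one_iff_even (by norm_num : (-1 : ℚ) ≠ 1)).mp hprod
  obtain ⟨c, hc⟩ := heven
  refine ⟨c, ?_⟩
  have hc2 : ((Finset.univ.filter (fun j => ¬ ε j = -1)).card : ℚ)
      = (n : ℚ) - S.card := by
    have h := hcard
    push_cast [← h]
    ring
  have hsum : ∑ j, ε j = (n : ℚ) - 2 * S.card := by
    rw [← Finset.sum_filter_add_sum_filter_not Finset.univ (fun j => ε j = -1)]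
    rw [Finset.sum_congr rfl (fun j hj => (Finset.mem_filter.mp hj).2)]
    rw [Finset.sum_congr rfl hone]
    simp only [Finset.sum_const, nsmul_eq_mul, mul_one, mul_neg_one]
    rw [hc2]
    ring
  rw [h1, hsum, hc]
  push_cast
  ring

/-- The sign patterns for the four basic matrices. -/
def sgn (m : ℕ) (t : Fin 4) (j : Fin (m + 3)) : ℚ :=
  if t = 0 then 1
  else if t = 1 then (if j = 0 then 1 else -1)
  else if t = 2 then (if j = 1 then 1 else -1)
  else (if j = 0 ∨ j = 1 then -1 else 1)

/-- The four basic diagonal matrices. -/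
def basicMat (m : ℕ) (t : Fin 4) : Matrix (Fin (m + 3)) (Fin (m + 3)) ℚ :=
  Matrix.of fun i j => if j = i then sgn m t j else 0

lemma sgn_cases (m : ℕ) (t : Fin 4) (j : Fin (m + 3)) :
    sgn m t j = 1 ∨ sgn m t j = -1 := by
  unfold sgn
  split_ifs <;> simp

lemma sgn_prod (m : ℕ) (hodd : Odd (m + 3)) (t : Fin 4) :
    ∏ j, sgn m t j = 1 := by
  have h01 : (1 : Fin (m + 3)) ≠ 0 := by simp [Fin.ext_iff]
  have hmem0 : (0 : Fin (m + 3)) ∈ Finset.univ := Finset.mem_univ _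
  have hmem1 : (1 : Fin (m + 3)) ∈ (Finset.univ.erase (0 : Fin (m + 3))) :=
    Finset.mem_erase.mpr ⟨h01, Finset.mem_univ _⟩
  have hcard_erase0 : (Finset.univ.erase (0 : Fin (m + 3))).card = m + 2 := by
    rw [Finset.card_erase_of_mem hmem0]
    simp
  have hcard_erase1 : (Finset.univ.erase (1 : Fin (m + 3))).card = m + 2 := by
    rw [Finset.card_erase_of_mem (Finset.mem_univ _)]
    simp
  have heven : Even (m + 2) := by
    rcases hodd with ⟨p, hp⟩
    exact ⟨p, by omega⟩
  have ht : t = 0 ∨ t = 1 ∨ t = 2 ∨ t = 3 := by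
    revert t; decide
  rcases ht with rfl | rfl | rfl | rfl
  · simp [sgn]
  · rw [← Finset.mul_prod_erase Finset.univ _ hmem0]
    have h' : ∀ j ∈ Finset.univ.erase (0 : Fin (m + 3)), sgn m 1 j = -1 := by
      intro j hj
      simp [sgn, (Finset.mem_erase.mp hj).1]
    rw [Finset.prod_congr rfl h', Finset.prod_const, hcard_erase0]
    simp [sgn, heven.neg_one_pow]
  · rw [← Finset.mul_prod_erase Finset.univ _ (Finset.mem_univ (1 : Fin (m + 3)))]
    have h' : ∀ j ∈ Finset.univ.erase (1 : Fin (m + 3)), sgn m 2 j = -1 := by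
      intro j hj
      simp [sgn, (Finset.mem_erase.mp hj).1]
    rw [Finset.prod_congr rfl h', Finset.prod_const, hcard_erase1]
    simp [sgn, heven.neg_one_pow]
  · rw [← Finset.mul_prod_erase Finset.univ _ hmem0,
      ← Finset.mul_prod_erase _ _ hmem1]
    have h' : ∀ j ∈ (Finset.univ.erase (0 : Fin (m + 3))).erase 1,
        sgn m 3 j = 1 := by
      intro j hj
      have h1 := (Finset.mem_erase.mp hj).1
      have h0 := (Finset.mem_erase.mp (Finset.mem_erase.mp hj).2).1
      simp [sgn, h0, h1]
    rw [Finset.prod_congr rfl h', Finset.prod_const_one]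
    simp [sgn, h01]

lemma basicMat_isEven (m : ℕ) (hodd : Odd (m + 3)) (t : Fin 4) :
    IsEvenSignedPermMatrix (basicMat m t) := by
  refine ⟨1, sgn m t, sgn_cases m t, sgn_prod m hodd t, ?_⟩
  intro i j
  simp [basicMat]
  congr

lemma basicMat_sum (m : ℕ) : ∑ t, basicMat m t = 0 := by
  ext i j
  simp only [Matrix.sum_apply, Fin.sum_univ_four, basicMat, Matrix.of_apply,
    Matrix.zero_apply]
  by_cases hji : j = i
  · simp only [if_pos hji, sgn]
    norm_num
    by_cases h0 : j = 0
    · simp [h0]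
    · by_cases h1 : j = 1
      · simp [h0, h1]
      · simp [h0, h1]
  · simp [hji]

/-- The property of having a balanced collection of size `k`. -/
def HasBalanced (n k : ℕ) : Prop :=
  ∃ A : Fin k → Matrix (Fin n) (Fin n) ℚ,
    (∀ i, IsEvenSignedPermMatrix (A i)) ∧ ∑ i, A i = 0

lemma hasBalanced_add {n k₁ k₂ : ℕ} (h₁ : HasBalanced n k₁) (h₂ : HasBalanced n k₂) :
    HasBalanced n (k₁ + k₂) := by
  obtain ⟨A₁, hA₁, hs₁⟩ := h₁
  obtain ⟨A₂, hA₂, hs₂⟩ := h₂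
  refine ⟨Fin.append A₁ A₂, ?_, ?_⟩
  · intro i
    refine Fin.addCases (fun i => ?_) (fun i => ?_) i
    · rw [Fin.append_left]; exact hA₁ i
    · rw [Fin.append_right]; exact hA₂ i
  · rw [Fin.sum_univ_add]
    simp only [Fin.append_left, Fin.append_right, hs₁, hs₂, add_zero]

theorem stmt_13 (n k : ℕ) (hn : 3 ≤ n) (hnodd : Odd n) (hk : 1 ≤ k) :
    (∃ A : Fin k → Matrix (Fin n) (Fin n) ℚ,
      (∀ i, IsEvenSignedPermMatrix (A i)) ∧ ∑ i, A i = 0) ↔ 4 ∣ k := by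
  constructor
  · rintro ⟨A, hA, hsum⟩
    choose c hc using fun t => entries_sum_aux (hA t)
    have h0 : ∑ t, ∑ i, ∑ j, A t i j = 0 := by
      have h2 : ∀ i j, ∑ t, A t i j = 0 := by
        intro i j
        have := congrFun (congrFun hsum i) j
        simpa [Matrix.sum_apply] using this
      calc ∑ t, ∑ i, ∑ j, A t i j = ∑ i, ∑ t, ∑ j, A t i j := Finset.sum_comm
        _ = ∑ i, ∑ j, ∑ t, A t i j := Finset.sum_congr rfl fun i _ => Finset.sum_comm
        _ = 0 := by simp [h2]
    have h3 : (0 : ℚ) = k * n - 4 * ∑ t, (c t : ℚ) := by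
      rw [← h0]
      rw [Finset.sum_congr rfl fun t _ => hc t]
      rw [Finset.sum_sub_distrib, Finset.sum_const, ← Finset.mul_sum]
      simp [mul_comm]
    have h4 : (k * n : ℕ) = 4 * ∑ t, c t := by
      have : ((k * n : ℕ) : ℚ) = ((4 * ∑ t, c t : ℕ) : ℚ) := by
        push_cast
        linarith
      exact_mod_cast this
    have hdvd : 4 ∣ k * n := ⟨∑ t, c t, h4⟩
    have hcop : Nat.Coprime 4 n := by
      have h2 : Nat.Coprime 2 n := Nat.coprime_two_left.mpr hnodd
      have h22 : Nat.Coprime (2 ^ 2) n := Nat.Coprime.pow_left 2 h2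
      simpa using h22
    exact hcop.dvd_of_dvd_mul_right hdvd
  · rintro ⟨p, rfl⟩
    obtain ⟨m, rfl⟩ : ∃ m, n = m + 3 := ⟨n - 3, by omega⟩
    have base : HasBalanced (m + 3) 4 :=
      ⟨basicMat m, basicMat_isEven m hnodd, basicMat_sum m⟩
    obtain ⟨q, rfl⟩ : ∃ q, p = q + 1 := ⟨p - 1, by omega⟩
    clear hk
    induction q with
    | zero => simpa [HasBalanced] using base
    | succ r ih =>
      have h := hasBalanced_add ih base
      have heq : 4 * (r + 1 + 1) = 4 * (r + 1) + 4 := by ring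
      rw [heq]
      exact h
end

section
/- Let n ≥ 1 and let r be a natural number that is not divisible by n. Consider the standard action of the special linear group SL(n, ℂ) on ℂⁿ = (Fin n → ℂ) by matrix-vector multiplication, and the induced action on the r-th tensor power ⨂^r ℂⁿ, where g ∈ SL(n, ℂ) acts as the r-fold tensor product of the linear map given by g. Then every element of ⨂^r ℂⁿ fixed by all elements of SL(n, ℂ) is zero. -/
open scoped TensorProduct

theorem stmt_14 (n : ℕ) (hn : 1 ≤ n) (r : ℕ) (hr : ¬ n ∣ r)
    (x : ⨂[ℂ]^r (Fin n → ℂ))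
    (hx : ∀ g : Matrix.SpecialLinearGroup (Fin n) ℂ,
      PiTensorProduct.map
        (fun _ : Fin r => (g : Matrix (Fin n) (Fin n) ℂ).mulVecLin) x = x) :
    x = 0 := by
  have hn0 : (n : ℕ) ≠ 0 := by omega
  set ζ : ℂ := Complex.exp (2 * Real.pi * Complex.I / n) with hζ
  have hprim : IsPrimitiveRoot ζ n := Complex.isPrimitiveRoot_exp n hn0
  have hdet : (ζ • (1 : Matrix (Fin n) (Fin n) ℂ)).det = 1 := by
    rw [Matrix.det_smul, Matrix.det_one, mul_one, Fintype.card_fin, hprim.pow_eq_one]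
  set g : Matrix.SpecialLinearGroup (Fin n) ℂ := ⟨ζ • 1, hdet⟩ with hg
  have hmul : (g : Matrix (Fin n) (Fin n) ℂ).mulVecLin = ζ • LinearMap.id := by
    ext v
    simp [hg, Matrix.mulVecLin_apply, Matrix.smul_mulVec, Matrix.one_mulVec]
  have key : ∀ y : ⨂[ℂ]^r (Fin n → ℂ),
      PiTensorProduct.map
        (fun _ : Fin r => (g : Matrix (Fin n) (Fin n) ℂ).mulVecLin) y = ζ ^ r • y := by
    intro y
    induction y using PiTensorProduct.induction_on with
    | smul_tprod c f =>
      rw [map_smul, PiTensorProduct.map_tprod]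
      simp only [hmul, LinearMap.smul_apply, LinearMap.id_coe, id_eq]
      rw [MultilinearMap.map_smul_univ]
      simp [smul_smul, mul_comm]
    | add a b ha hb => rw [map_add, ha, hb, smul_add]
  have h1 : ζ ^ r • x = x := by rw [← key x, hx g]
  by_contra hx0
  apply hr
  have : ζ ^ r = 1 := by
    have h2 : (ζ ^ r - 1) • x = 0 := by
      have h3 : (ζ ^ r - 1) • x = ζ ^ r • x - (1 : ℂ) • x := sub_smul (ζ ^ r) 1 x
      rw [h3, one_smul, h1, sub_self]
    rcases smul_eq_zero.mp h2 with h | h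
    · linear_combination h
    · exact absurd h hx0
  exact (hprim.pow_eq_one_iff_dvd r).mp this
end

section
/- Let n ≥ 1 and let r be a natural number divisible by n. Consider the standard action of the special linear group SL(n, ℂ) on ℂⁿ = (Fin n → ℂ) by matrix-vector multiplication, and the induced action on the r-th tensor power ⨂^r ℂⁿ, where g ∈ SL(n, ℂ) acts as the r-fold tensor product of the linear map given by g. Then there exists a nonzero element of ⨂^r ℂⁿ fixed by all elements of SL(n, ℂ). -/
open scoped TensorProduct
open PiTensorProduct

noncomputable section Aux

variable (n : ℕ)

/-- The alternatization of the canonical multilinear map into the tensor power. -/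
def altTprod : (Fin n → ℂ) [⋀^Fin n]→ₗ[ℂ] ⨂[ℂ]^n (Fin n → ℂ) :=
  MultilinearMap.alternatization (PiTensorProduct.tprod ℂ)

/-- The basic invariant element of the `n`-th tensor power. -/
def omegaInv : ⨂[ℂ]^n (Fin n → ℂ) :=
  altTprod n (Pi.basisFun ℂ (Fin n))

variable {n}

theorem alt_apply_eq {N : Type*} [AddCommGroup N] [Module ℂ N]
    (G : (Fin n → ℂ) [⋀^Fin n]→ₗ[ℂ] N) (v : Fin n → Fin n → ℂ) :
    G v = (Pi.basisFun ℂ (Fin n)).det v • G (Pi.basisFun ℂ (Fin n)) := by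
  set e := Pi.basisFun ℂ (Fin n) with he
  have h : G = (LinearMap.toSpanSingleton ℂ N (G e)).compAlternatingMap e.det := by
    refine Module.Basis.ext_alternating e fun w hw => ?_
    let σ : Equiv.Perm (Fin n) := Equiv.ofBijective w (Finite.injective_iff_bijective.1 hw)
    change G (e ∘ σ) = (LinearMap.toSpanSingleton ℂ N (G e)).compAlternatingMap e.det (e ∘ σ)
    simp [AlternatingMap.map_perm, Module.Basis.det_self, LinearMap.toSpanSingleton_apply,
      smul_comm]
  conv_lhs => rw [h]
  simp [LinearMap.toSpanSingleton_apply]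

theorem map_omegaInv (f : (Fin n → ℂ) →ₗ[ℂ] (Fin n → ℂ)) :
    PiTensorProduct.map (fun _ : Fin n => f) (omegaInv n) = LinearMap.det f • omegaInv n := by
  classical
  set e := Pi.basisFun ℂ (Fin n) with he
  have h1 : PiTensorProduct.map (fun _ : Fin n => f) (omegaInv n)
      = MultilinearMap.alternatization
          ((PiTensorProduct.map (fun _ : Fin n => f)).compMultilinearMap
            (PiTensorProduct.tprod ℂ)) e := by
    rw [LinearMap.compMultilinearMap_alternatization]
    rfl
  have h2 : MultilinearMap.alternatization
        ((PiTensorProduct.map (fun _ : Fin n => f)).compMultilinearMap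
          (PiTensorProduct.tprod ℂ)) e = altTprod n (fun i => f (e i)) := by
    simp [MultilinearMap.alternatization_apply, MultilinearMap.domDomCongr_apply,
      altTprod, Function.comp]
  rw [h1, h2, alt_apply_eq (altTprod n) (fun i => f (e i))]
  have h3 : e.det (fun i => f (e i)) = LinearMap.det f := by
    rw [show (fun i => f (e i)) = ⇑f ∘ ⇑e from rfl, Module.Basis.det_comp, Module.Basis.det_self, mul_one]
  rw [h3]
  rfl

theorem lift_det_omegaInv :
    (PiTensorProduct.lift ((Pi.basisFun ℂ (Fin n)).det.toMultilinearMap)) (omegaInv n)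
      = (Nat.factorial n : ℂ) := by
  classical
  set e := Pi.basisFun ℂ (Fin n) with he
  have h1 : (PiTensorProduct.lift (e.det.toMultilinearMap)).compMultilinearMap
      (PiTensorProduct.tprod ℂ) = e.det.toMultilinearMap := by
    ext v
    simp
  have h2 : (PiTensorProduct.lift (e.det.toMultilinearMap)) (omegaInv n)
      = MultilinearMap.alternatization
          ((PiTensorProduct.lift (e.det.toMultilinearMap)).compMultilinearMap
            (PiTensorProduct.tprod ℂ)) e := by
    rw [LinearMap.compMultilinearMap_alternatization]
    rfl
  rw [h2, h1]
  rw [AlternatingMap.coe_alternatization]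
  simp [Module.Basis.det_self]

theorem omegaInv_ne_zero : omegaInv n ≠ 0 := by
  intro h
  have hD := lift_det_omegaInv (n := n)
  rw [h] at hD
  simp at hD
  exact Nat.factorial_ne_zero n (by exact_mod_cast hD.symm)

end Aux

noncomputable section Ind

theorem exists_invariant (n k : ℕ) :
    ∃ (x : ⨂[ℂ]^(n*k) (Fin n → ℂ)) (φ : (⨂[ℂ]^(n*k) (Fin n → ℂ)) →ₗ[ℂ] ℂ),
      φ x ≠ 0 ∧ ∀ f : (Fin n → ℂ) →ₗ[ℂ] (Fin n → ℂ), LinearMap.det f = 1 →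
        PiTensorProduct.map (fun _ : Fin (n*k) => f) x = x := by
  induction k with
  | zero =>
      haveI : IsEmpty (Fin (n*0)) := by simp [Nat.mul_zero]; infer_instance
      refine ⟨PiTensorProduct.tprod ℂ (fun _ => 0),
        (PiTensorProduct.isEmptyEquiv (Fin (n*0))).toLinearMap, ?_, ?_⟩
      · simp [PiTensorProduct.isEmptyEquiv_apply_tprod]
      · intro f _
        rw [PiTensorProduct.map_tprod]
        congr 1
        funext i
        exact isEmptyElim i
  | succ k ih =>
      obtain ⟨x, φ, hφ, hinv⟩ := ih
      let ε : Fin (n*k) ⊕ Fin n ≃ Fin (n*(k+1)) :=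
        finSumFinEquiv.trans (finCongr (by ring))
      let Ψ : ((⨂[ℂ]^(n*k) (Fin n → ℂ)) ⊗[ℂ] (⨂[ℂ]^n (Fin n → ℂ)))
          ≃ₗ[ℂ] ⨂[ℂ]^(n*(k+1)) (Fin n → ℂ) :=
        (PiTensorProduct.tmulEquiv ℂ (Fin n → ℂ)).trans
          (PiTensorProduct.reindex ℂ (fun _ : Fin (n*k) ⊕ Fin n => (Fin n → ℂ)) ε)
      have key : ∀ (f : (Fin n → ℂ) →ₗ[ℂ] (Fin n → ℂ)),
          (PiTensorProduct.map (fun _ : Fin (n*(k+1)) => f)).comp Ψ.toLinearMap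
            = Ψ.toLinearMap.comp
              (TensorProduct.map (PiTensorProduct.map (fun _ => f))
                (PiTensorProduct.map (fun _ => f))) := by
        intro f
        ext a b
        simp [Ψ, PiTensorProduct.tmulEquiv_apply, PiTensorProduct.reindex_tprod,
          PiTensorProduct.map_tprod]
        congr 1
        funext j
        cases h : ε.symm j with
        | inl i => simp
        | inr i => simp
      refine ⟨Ψ (x ⊗ₜ omegaInv n),
        ((LinearMap.mul' ℂ ℂ).comp
          (TensorProduct.map φ (PiTensorProduct.lift
            ((Pi.basisFun ℂ (Fin n)).det.toMultilinearMap)))).comp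
          Ψ.symm.toLinearMap, ?_, ?_⟩
      · simp only [LinearMap.comp_apply, LinearEquiv.coe_coe, LinearEquiv.coe_toLinearMap,
          LinearEquiv.symm_apply_apply, TensorProduct.map_tmul, LinearMap.mul'_apply,
          lift_det_omegaInv]
        exact mul_ne_zero hφ (Nat.cast_ne_zero.mpr (Nat.factorial_ne_zero n))
      · intro f hf
        have := congrArg (fun (L : _ →ₗ[ℂ] _) => L (x ⊗ₜ[ℂ] omegaInv n)) (key f)
        simp only [LinearMap.comp_apply, LinearEquiv.coe_coe, TensorProduct.map_tmul] at this
        rw [this, hinv f hf, map_omegaInv, hf, one_smul]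

end Ind

theorem stmt_15 (n : ℕ) (hn : 1 ≤ n) (r : ℕ) (hr : n ∣ r) :
    ∃ x : ⨂[ℂ]^r (Fin n → ℂ), x ≠ 0 ∧
      ∀ g : Matrix.SpecialLinearGroup (Fin n) ℂ,
        PiTensorProduct.map
          (fun _ : Fin r => (g : Matrix (Fin n) (Fin n) ℂ).mulVecLin) x = x := by
  obtain ⟨k, rfl⟩ := hr
  obtain ⟨x, φ, hφ, hinv⟩ := exists_invariant n k
  refine ⟨x, fun h => hφ (by simp [h]), fun g => ?_⟩
  apply hinv
  have : (g : Matrix (Fin n) (Fin n) ℂ).mulVecLin = Matrix.toLin' (g : Matrix (Fin n) (Fin n) ℂ) :=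
    rfl
  rw [this, LinearMap.det_toLin']
  exact g.2
end
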